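/- Let (f_k)_{k∈ℕ} be a frame sequence in H with synthesis operator T and frame operator S = T T*, and let T† and S† denote the Moore-Penrose pseudoinverses of T and S. Then T† = T* ∘ S†; explicitly, T†f = (⟨f, S†f_k⟩)_k for every f ∈ H, i.e., the pseudoinverse of T is the analysis operator of the dual sequence (S†f_k). -/

import Mathlib

/- Setting: `H` is a complex Hilbert space, `ℓ2` is the Hilbert space of square-summable
complex sequences with standard orthonormal basis `lp.single 2 k 1`. -/

noncomputable section

abbrev ℓ2 : Type := lp (fun _ : ℕ => ℂ) 2

variable {H : Type} [NormedAddCommGroup H] [InnerProductSpace ℂ H] [CompleteSpace H]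

/-- The closed linear span `V` of the set of values of the sequence `f`. -/
def spanClosure (f : ℕ → H) : Submodule ℂ H :=
  (Submodule.span ℂ (Set.range f)).topologicalClosure

instance (f : ℕ → H) : CompleteSpace (spanClosure f) :=
  Submodule.topologicalClosure.completeSpace _

/-- `f` is a frame sequence with frame bounds `A`, `B`:  the frame inequality
`A‖g‖² ≤ ∑ₖ |⟨g, fₖ⟩|² ≤ B‖g‖²` holds for every `g` in the closed linear span `V` of the `fₖ`.
(In Mathlib's convention, the paper's `⟨g, fₖ⟩`, linear in the first argument, is `⟪fₖ, g⟫`.) -/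
def IsFrameSeqWith (f : ℕ → H) (A B : ℝ) : Prop :=
  0 < A ∧ 0 < B ∧
    ∀ g ∈ spanClosure f,
      Summable (fun k => ‖(inner ℂ (f k) g : ℂ)‖ ^ 2) ∧
      A * ‖g‖ ^ 2 ≤ ∑' k, ‖(inner ℂ (f k) g : ℂ)‖ ^ 2 ∧
      (∑' k, ‖(inner ℂ (f k) g : ℂ)‖ ^ 2) ≤ B * ‖g‖ ^ 2

/-- `Ad` is the Moore–Penrose pseudoinverse of the bounded operator `A`:
`A A† A = A`, `A† A A† = A†`, `(A A†)* = A A†` and `(A† A)* = A† A`. -/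
def IsMoorePenrose {E F : Type} [NormedAddCommGroup E] [InnerProductSpace ℂ E] [CompleteSpace E]
    [NormedAddCommGroup F] [InnerProductSpace ℂ F] [CompleteSpace F]
    (A : E →L[ℂ] F) (Ad : F →L[ℂ] E) : Prop :=
  A ∘L Ad ∘L A = A ∧ Ad ∘L A ∘L Ad = Ad ∧
  ContinuousLinearMap.adjoint (A ∘L Ad) = A ∘L Ad ∧
  ContinuousLinearMap.adjoint (Ad ∘L A) = Ad ∘L A

/-! The pseudoinverse is unique, so it suffices to check the four Penrose equations for
`T* S†`. Three of them follow at once from those of `S†` for `S = T T*`. The remaining one,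
`T T* S† T = T`, says that `P = S S†` fixes the range of `T`: `(1 - P) S = 0` gives
`((1 - P) T) ((1 - P) T)* = 0`, hence `(1 - P) T = 0`. Finally `S` is self-adjoint, so `S†*` is
also a pseudoinverse of `S` and `S†` is self-adjoint; this moves `S†` across the inner product in
the coordinates `(T* S† g)ₖ = ⟪fₖ, S† g⟫`. -/

open ContinuousLinearMap

theorem apply_lp_single_of_hasSum {ι 𝕜 E : Type*} [DecidableEq ι] [NormedField 𝕜]
    [NormedAddCommGroup E] [NormedSpace 𝕜 E] {f : ι → E} {T : lp (fun _ : ι => 𝕜) 2 →L[𝕜] E}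
    (hT : ∀ c, HasSum (fun k => c k • f k) (T c)) (k : ι) : T (lp.single 2 k 1) = f k := by
  refine (hT _).unique ?_
  convert hasSum_ite_eq k (f k) using 2 with j
  by_cases hj : j = k <;> simp [hj]

section Adjoint

variable {𝕜 E F : Type*} [RCLike 𝕜] [NormedAddCommGroup E] [InnerProductSpace 𝕜 E]
  [NormedAddCommGroup F] [InnerProductSpace 𝕜 F] [CompleteSpace E] [CompleteSpace F]

theorem adjoint_apply_lp_apply {ι : Type*} [DecidableEq ι] (T : lp (fun _ : ι => 𝕜) 2 →L[𝕜] E)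
    (g : E) (k : ι) : adjoint T g k = inner 𝕜 (T (lp.single 2 k 1)) g := by
  rw [← adjoint_inner_right, lp.inner_single_left, RCLike.inner_apply, map_one, mul_one]

theorem self_comp_adjoint_eq_zero_iff {X : E →L[𝕜] F} : X ∘L adjoint X = 0 ↔ X = 0 := by
  simpa using adjoint_comp_self_eq_zero_iff (A := adjoint X)

theorem comp_eq_self_of_comp_self_comp_adjoint {T : E →L[𝕜] F} {P : F →L[𝕜] F}
    (hP : P ∘L T ∘L adjoint T = T ∘L adjoint T) : P ∘L T = T := by
  set Q := ContinuousLinearMap.id 𝕜 F - P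
  have hQ : Q ∘L T ∘L adjoint T = 0 := by rw [sub_comp, id_comp, hP, sub_self]
  have hQT : (Q ∘L T) ∘L adjoint (Q ∘L T) = 0 := by
    rw [adjoint_comp, comp_assoc, ← comp_assoc T, ← comp_assoc Q, hQ, zero_comp]
  rw [self_comp_adjoint_eq_zero_iff, sub_comp, id_comp, sub_eq_zero] at hQT
  exact hQT.symm

end Adjoint

section MoorePenrose

variable {E F : Type} [NormedAddCommGroup E] [InnerProductSpace ℂ E] [CompleteSpace E]
  [NormedAddCommGroup F] [InnerProductSpace ℂ F] [CompleteSpace F]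

theorem isMoorePenrose_adjoint {A : E →L[ℂ] F} {Ad : F →L[ℂ] E} (h : IsMoorePenrose A Ad) :
    IsMoorePenrose (adjoint A) (adjoint Ad) := by
  obtain ⟨h1, h2, h3, h4⟩ := h
  refine ⟨?_, ?_, ?_, ?_⟩
  · simpa only [adjoint_comp, comp_assoc] using congrArg adjoint h1
  · simpa only [adjoint_comp, comp_assoc] using congrArg adjoint h2
  · rw [← adjoint_comp, adjoint_adjoint, h4]
  · rw [← adjoint_comp, adjoint_adjoint, h3]

theorem IsMoorePenrose.comp_left_eq {A : E →L[ℂ] F} {B C : F →L[ℂ] E}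
    (hB : IsMoorePenrose A B) (hC : IsMoorePenrose A C) : A ∘L B = A ∘L C :=
  calc A ∘L B = adjoint (A ∘L B) := hB.2.2.1.symm
    _ = adjoint ((A ∘L C ∘L A) ∘L B) := by rw [hC.1]
    _ = adjoint (A ∘L B) ∘L adjoint (A ∘L C) := by simp only [adjoint_comp, comp_assoc]
    _ = (A ∘L B ∘L A) ∘L C := by rw [hB.2.2.1, hC.2.2.1]; simp only [comp_assoc]
    _ = A ∘L C := by rw [hB.1]

theorem IsMoorePenrose.unique {A : E →L[ℂ] F} {B C : F →L[ℂ] E}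
    (hB : IsMoorePenrose A B) (hC : IsMoorePenrose A C) : B = C := by
  have hBA : B ∘L A = C ∘L A := by
    rw [← hB.2.2.2, ← hC.2.2.2, adjoint_comp, adjoint_comp,
      (isMoorePenrose_adjoint hB).comp_left_eq (isMoorePenrose_adjoint hC)]
  calc B = B ∘L A ∘L B := hB.2.1.symm
    _ = (C ∘L A) ∘L C := by rw [hB.comp_left_eq hC, ← comp_assoc, hBA]
    _ = C := by rw [comp_assoc, hC.2.1]

theorem IsMoorePenrose.isSelfAdjoint {S Sd : E →L[ℂ] E} (h : IsMoorePenrose S Sd)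
    (hS : IsSelfAdjoint S) : IsSelfAdjoint Sd := by
  rw [isSelfAdjoint_iff'] at hS ⊢
  exact (hS ▸ isMoorePenrose_adjoint h).unique h

theorem isMoorePenrose_adjoint_comp {T : E →L[ℂ] F} {Sd : F →L[ℂ] F}
    (h : IsMoorePenrose (T ∘L adjoint T) Sd) : IsMoorePenrose T (adjoint T ∘L Sd) := by
  have hSd : adjoint Sd = Sd :=
    (h.isSelfAdjoint (isPositive_self_comp_adjoint T).isSelfAdjoint).adjoint_eq
  obtain ⟨h1, h2, h3, -⟩ := h
  have hP : (T ∘L adjoint T ∘L Sd) ∘L T = T := by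
    refine comp_eq_self_of_comp_self_comp_adjoint ?_
    simpa only [comp_assoc] using h1
  refine ⟨?_, ?_, ?_, ?_⟩
  · simpa only [comp_assoc] using hP
  · simpa only [comp_assoc] using congrArg (adjoint T ∘L ·) h2
  · simpa only [comp_assoc] using h3
  · rw [adjoint_comp, adjoint_comp, adjoint_adjoint, hSd, comp_assoc]

end MoorePenrose

theorem stmt11_general (f : ℕ → H)
    (T : ℓ2 →L[ℂ] H) (hT : ∀ c : ℓ2, HasSum (fun k => c k • f k) (T c))
    (S : H →L[ℂ] H) (hS : S = T ∘L ContinuousLinearMap.adjoint T)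
    (Tdag : H →L[ℂ] ℓ2) (hTdag : IsMoorePenrose T Tdag)
    (Sdag : H →L[ℂ] H) (hSdag : IsMoorePenrose S Sdag) :
    Tdag = ContinuousLinearMap.adjoint T ∘L Sdag ∧
      ∀ (g : H) (k : ℕ), (Tdag g) k = (inner ℂ (Sdag (f k)) g : ℂ) := by
  subst hS
  have hTdag_eq : Tdag = adjoint T ∘L Sdag := hTdag.unique (isMoorePenrose_adjoint_comp hSdag)
  have hSdag_sa : IsSelfAdjoint Sdag :=
    hSdag.isSelfAdjoint (isPositive_self_comp_adjoint T).isSelfAdjoint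
  refine ⟨hTdag_eq, fun g k => ?_⟩
  rw [hTdag_eq, comp_apply, adjoint_apply_lp_apply, apply_lp_single_of_hasSum hT,
    ← adjoint_inner_left, hSdag_sa.adjoint_eq]

/-- for a frame sequence with synthesis operator `T`, frame operator
`S = T T*`, and Moore-Penrose pseudoinverses `T†`, `S†`: `T† = T* ∘ S†`; explicitly,
`T†g = (⟨g, S†fₖ⟩)ₖ`, i.e. `T†` is the analysis operator of the dual sequence `(S†fₖ)`. -/
theorem stmt11 (f : ℕ → H) (A B : ℝ) (hF : IsFrameSeqWith f A B)
    (T : ℓ2 →L[ℂ] H) (hT : ∀ c : ℓ2, HasSum (fun k => c k • f k) (T c))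
    (S : H →L[ℂ] H) (hS : S = T ∘L ContinuousLinearMap.adjoint T)
    (Tdag : H →L[ℂ] ℓ2) (hTdag : IsMoorePenrose T Tdag)
    (Sdag : H →L[ℂ] H) (hSdag : IsMoorePenrose S Sdag) :
    Tdag = ContinuousLinearMap.adjoint T ∘L Sdag ∧
      ∀ (g : H) (k : ℕ), (Tdag g) k = (inner ℂ (Sdag (f k)) g : ℂ) :=
  stmt11_general f T hT S hS Tdag hTdag Sdag hSdag

end
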